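/- For every finite simple graph F there exists a constant t₀ (depending only on F) such that for every t ≥ t₀, every finite simple graph G with at least one vertex, and every binary sequence S, the graph ILM^t(S,G) contains an induced subgraph isomorphic to F. -/

import Mathlib

open SimpleGraph

/-- Transitive step: each vertex `x` gets a clone `x'` adjacent to the closed
neighborhood of `x`. Original vertices are `Sum.inl`, clones are `Sum.inr`. -/
def LTstep {V : Type} (G : SimpleGraph V) : SimpleGraph (V ⊕ V) where
  Adj x y :=
    match x, y with
    | Sum.inl a, Sum.inl b => G.Adj a b
    | Sum.inl a, Sum.inr b => a = b ∨ G.Adj a b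
    | Sum.inr a, Sum.inl b => b = a ∨ G.Adj b a
    | Sum.inr _, Sum.inr _ => False
  symm := by
    refine ⟨?_⟩
    rintro (a|a) (b|b) h
    · exact h.symm
    · exact h
    · exact h
    · exact h.elim
  loopless := by
    refine ⟨?_⟩
    rintro (a|a) h
    · exact G.irrefl h
    · exact h

/-- Anti-transitive step: each vertex `x` gets an anti-clone `x*` adjacent to the
complement of the closed neighborhood of `x`. -/
def LATstep {V : Type} (G : SimpleGraph V) : SimpleGraph (V ⊕ V) where
  Adj x y :=
    match x, y with
    | Sum.inl a, Sum.inl b => G.Adj a b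
    | Sum.inl a, Sum.inr b => a ≠ b ∧ ¬ G.Adj a b
    | Sum.inr a, Sum.inl b => b ≠ a ∧ ¬ G.Adj b a
    | Sum.inr _, Sum.inr _ => False
  symm := by
    refine ⟨?_⟩
    rintro (a|a) (b|b) h
    · exact h.symm
    · exact h
    · exact h
    · exact h.elim
  loopless := by
    refine ⟨?_⟩
    rintro (a|a) h
    · exact G.irrefl h
    · exact h

/-- The vertex type of the `t`-th iterated local model graph. -/
def ILMVertex (V : Type) : ℕ → Type
  | 0 => V
  | t + 1 => ILMVertex V t ⊕ ILMVertex V t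

instance ILMVertex.fintype {V : Type} [Fintype V] : ∀ t, Fintype (ILMVertex V t)
  | 0 => inferInstanceAs (Fintype V)
  | t + 1 =>
    letI := ILMVertex.fintype (V := V) t
    inferInstanceAs (Fintype (ILMVertex V t ⊕ ILMVertex V t))

instance ILMVertex.nonempty {V : Type} [Nonempty V] : ∀ t, Nonempty (ILMVertex V t)
  | 0 => inferInstanceAs (Nonempty V)
  | t + 1 =>
    letI := ILMVertex.nonempty (V := V) t
    inferInstanceAs (Nonempty (ILMVertex V t ⊕ ILMVertex V t))

/-- The iterated local model: at step `t` apply a transitive step if `S t = true`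
(i.e. `s_t = 1`) and an anti-transitive step if `S t = false` (i.e. `s_t = 0`). -/
def ILM {V : Type} (S : ℕ → Bool) (G : SimpleGraph V) : (t : ℕ) → SimpleGraph (ILMVertex V t)
  | 0 => G
  | t + 1 => if S t then LTstep (ILM S G t) else LATstep (ILM S G t)

namespace ILMaux

@[simp] lemma LT_ll {V : Type} (H : SimpleGraph V) (a b : V) :
    (LTstep H).Adj (Sum.inl a) (Sum.inl b) ↔ H.Adj a b := Iff.rfl
@[simp] lemma LT_rl {V : Type} (H : SimpleGraph V) (a b : V) :
    (LTstep H).Adj (Sum.inr a) (Sum.inl b) ↔ (b = a ∨ H.Adj b a) := Iff.rfl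
@[simp] lemma LT_lr {V : Type} (H : SimpleGraph V) (a b : V) :
    (LTstep H).Adj (Sum.inl a) (Sum.inr b) ↔ (a = b ∨ H.Adj a b) := Iff.rfl
@[simp] lemma LT_rr {V : Type} (H : SimpleGraph V) (a b : V) :
    (LTstep H).Adj (Sum.inr a) (Sum.inr b) ↔ False := Iff.rfl
@[simp] lemma LAT_ll {V : Type} (H : SimpleGraph V) (a b : V) :
    (LATstep H).Adj (Sum.inl a) (Sum.inl b) ↔ H.Adj a b := Iff.rfl
@[simp] lemma LAT_rl {V : Type} (H : SimpleGraph V) (a b : V) :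
    (LATstep H).Adj (Sum.inr a) (Sum.inl b) ↔ (b ≠ a ∧ ¬ H.Adj b a) := Iff.rfl
@[simp] lemma LAT_lr {V : Type} (H : SimpleGraph V) (a b : V) :
    (LATstep H).Adj (Sum.inl a) (Sum.inr b) ↔ (a ≠ b ∧ ¬ H.Adj a b) := Iff.rfl
@[simp] lemma LAT_rr {V : Type} (H : SimpleGraph V) (a b : V) :
    (LATstep H).Adj (Sum.inr a) (Sum.inr b) ↔ False := Iff.rfl

/-- one transition of the pair-state automaton: state = (equal?, adjacent?) -/
def mStep (s bf bg : Bool) (st : Bool × Bool) : Bool × Bool :=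
  match bf, bg with
  | true, true => (st.1, false)
  | false, false => st
  | _, _ => (false, cond s (st.1 || st.2) (!(st.1 || st.2)))

def mState (S f g : ℕ → Bool) : ℕ → Bool × Bool
  | 0 => (true, false)
  | k+1 => mStep (S k) (f k) (g k) (mState S f g k)

lemma mStep_comm (s a b : Bool) (st : Bool × Bool) : mStep s a b st = mStep s b a st := by
  cases a <;> cases b <;> rfl

lemma mState_comm (S f g : ℕ → Bool) : ∀ t, mState S f g t = mState S g f t
  | 0 => rfl
  | t+1 => by rw [mState, mState, mState_comm S f g t, mStep_comm]

def emb {V : Type} (v0 : V) (f : ℕ → Bool) : (t : ℕ) → ILMVertex V t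
  | 0 => v0
  | t+1 => (cond (f t) (Sum.inr (emb v0 f t)) (Sum.inl (emb v0 f t)) : ILMVertex V t ⊕ ILMVertex V t)

lemma emb_spec {V : Type} (G : SimpleGraph V) (S : ℕ → Bool) (v0 : V) :
    ∀ (t : ℕ) (f g : ℕ → Bool),
      (emb v0 f t = emb v0 g t ↔ (mState S f g t).1 = true) ∧
      ((ILM S G t).Adj (emb v0 f t) (emb v0 g t) ↔ (mState S f g t).2 = true) := by
  intro t
  induction t with
  | zero =>
    intro f g
    constructor
    · simp [emb, mState]; rfl
    · simp only [emb, mState]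
      exact iff_of_false G.irrefl (by simp)
  | succ t ih =>
    intro f g
    obtain ⟨ih1, ih2⟩ := ih f g
    have hILM : ILM S G (t+1) = if S t then LTstep (ILM S G t) else LATstep (ILM S G t) := rfl
    have hemb : ∀ h : ℕ → Bool,
        emb v0 h (t+1) = (cond (h t) (Sum.inr (emb v0 h t)) (Sum.inl (emb v0 h t)) :
          ILMVertex V t ⊕ ILMVertex V t) := fun _ => rfl
    have hstate : mState S f g (t+1) = mStep (S t) (f t) (g t) (mState S f g t) := rfl
    set st := mState S f g t with hst
    cases hf : f t <;> cases hg : g t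
    · -- inl inl
      constructor
      · rw [hemb f, hemb g, hf, hg, hstate, hf, hg]
        exact Iff.trans (by exact Sum.inl_injective.eq_iff) ih1
      · rw [hemb f, hemb g, hf, hg, hstate, hf, hg, hILM]
        simp only [cond_false, mStep]
        cases hS : S t
        · simp only [Bool.false_eq_true, if_false, LAT_ll]; exact ih2
        · simp only [if_true, LT_ll]; exact ih2
    · -- inl inr
      have he : (emb v0 g t = emb v0 f t ↔ st.1 = true) :=
        ⟨fun h => ih1.mp h.symm, fun h => (ih1.mpr h).symm⟩
      constructor
      · rw [hemb f, hemb g, hf, hg, hstate, hf, hg]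
        simp [mStep]
      · rw [hemb f, hemb g, hf, hg, hstate, hf, hg, hILM]
        simp only [cond_false, cond_true, mStep]
        cases hS : S t
        · simp only [Bool.false_eq_true, if_false, LAT_lr, cond_false, Bool.not_eq_true',
            ← Bool.not_eq_true, Bool.or_eq_true, not_or]
          exact and_congr (not_congr ih1) (not_congr ih2)
        · simp only [if_true, LT_lr, cond_true, Bool.or_eq_true]
          exact or_congr ih1 ih2
    · -- inr inl
      have he : (emb v0 g t = emb v0 f t ↔ st.1 = true) :=
        ⟨fun h => ih1.mp h.symm, fun h => (ih1.mpr h).symm⟩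
      have ha : ((ILM S G t).Adj (emb v0 g t) (emb v0 f t) ↔ st.2 = true) :=
        ((ILM S G t).adj_comm _ _).trans ih2
      constructor
      · rw [hemb f, hemb g, hf, hg, hstate, hf, hg]
        simp [mStep]
      · rw [hemb f, hemb g, hf, hg, hstate, hf, hg, hILM]
        simp only [cond_false, cond_true, mStep]
        cases hS : S t
        · simp only [Bool.false_eq_true, if_false, LAT_rl, cond_false, Bool.not_eq_true',
            ← Bool.not_eq_true, Bool.or_eq_true, not_or]
          exact and_congr (not_congr he) (not_congr ha)
        · simp only [if_true, LT_rl, cond_true, Bool.or_eq_true]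
          exact or_congr he ha
    · -- inr inr
      constructor
      · rw [hemb f, hemb g, hf, hg, hstate, hf, hg]
        exact Iff.trans (by exact Sum.inr_injective.eq_iff) ih1
      · rw [hemb f, hemb g, hf, hg, hstate, hf, hg, hILM]
        simp only [cond_true, mStep]
        cases hS : S t
        · simp [Bool.false_eq_true]
        · simp

/-- bit pattern within a 6-slot block, for the left/right endpoint of an
edge/nonedge pair -/
def pat (edge : Bool) (left : Bool) (o : ℕ) : Bool :=
  match edge, left with
  | true, true => o == 0 || o == 2
  | true, false => o == 1 || o == 3
  | false, true => o == 0 || o == 2 || o == 3 || o == 4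
  | false, false => o == 1 || o == 2 || o == 3 || o == 5

/-- slot-level bit vectors: slot `s` lies in block `s/6` (for the pair
`(q/n, q%n)`) at offset `s%6`. -/
def bits (n : ℕ) (adjB : ℕ → ℕ → Bool) (u : ℕ) (s : ℕ) : Bool :=
  let q := s / 6; let o := s % 6; let i := q / n; let j := q % n
  if i < j then
    if u = i then pat (adjB i j) true o
    else if u = j then pat (adjB i j) false o
    else false
  else false

def run6 (σ : Bool) (pf pg : ℕ → Bool) (st : Bool × Bool) : Bool × Bool :=
  mStep σ (pf 5) (pg 5) (mStep σ (pf 4) (pg 4) (mStep σ (pf 3) (pg 3)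
    (mStep σ (pf 2) (pg 2) (mStep σ (pf 1) (pg 1) (mStep σ (pf 0) (pg 0) st)))))

lemma state_block (σ : Bool) (f g : ℕ → Bool) (q : ℕ) :
    mState (fun _ => σ) f g (6*q+6) =
      run6 σ (fun o => f (6*q+o)) (fun o => g (6*q+o)) (mState (fun _ => σ) f g (6*q)) := rfl

lemma run6_congr {σ : Bool} {pf pg pf' pg' : ℕ → Bool} {st : Bool × Bool}
    (h : ∀ o < 6, pf o = pf' o ∧ pg o = pg' o) :
    run6 σ pf pg st = run6 σ pf' pg' st := by
  unfold run6
  rw [(h 0 (by omega)).1, (h 1 (by omega)).1, (h 2 (by omega)).1, (h 3 (by omega)).1,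
    (h 4 (by omega)).1, (h 5 (by omega)).1, (h 0 (by omega)).2, (h 1 (by omega)).2,
    (h 2 (by omega)).2, (h 3 (by omega)).2, (h 4 (by omega)).2, (h 5 (by omega)).2]

lemma run6_id (σ : Bool) (st : Bool × Bool) :
    run6 σ (fun _ => false) (fun _ => false) st = st := rfl

lemma run6_own : ∀ σ e : Bool,
    run6 σ (pat e true) (pat e false) (true, false) = (false, e) ∧
    run6 σ (pat e true) (pat e false) (false, true) = (false, e) := by decide

lemma run6_solo_left : ∀ σ e x L : Bool,
    run6 σ (pat e L) (fun _ => false) (true, false) = (false, true) ∧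
    run6 σ (pat e L) (fun _ => false) (false, x) = (false, x) := by decide

lemma run6_solo_right : ∀ σ e x L : Bool,
    run6 σ (fun _ => false) (pat e L) (true, false) = (false, true) ∧
    run6 σ (fun _ => false) (pat e L) (false, x) = (false, x) := by decide

def touches (n u w q : ℕ) : Prop :=
  q / n < q % n ∧ (q / n = u ∨ q / n = w ∨ q % n = u ∨ q % n = w)

instance (n u w q : ℕ) : Decidable (touches n u w q) := by
  unfold touches; infer_instance

def expectedSt (n : ℕ) (adjB : ℕ → ℕ → Bool) (u w q : ℕ) : Bool × Bool :=
  if n*u + w < q then (false, adjB u w)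
  else if ∃ q' < q, touches n u w q' then (false, true) else (true, false)
lemma third_party_step {σ : Bool} {P Q : ℕ → Bool} {n : ℕ} {adjB : ℕ → ℕ → Bool}
    {u w q : ℕ} (htq : touches n u w q) (hBq : q ≠ n*u + w)
    (hrun1 : run6 σ P Q (true, false) = (false, true))
    (hrun2 : ∀ x, run6 σ P Q (false, x) = (false, x)) :
    run6 σ P Q (expectedSt n adjB u w q) = expectedSt n adjB u w (q+1) := by
  by_cases hB : n*u + w < q
  · rw [expectedSt, if_pos hB, hrun2, expectedSt, if_pos (by omega)]
  · have hBq' : ¬ (n*u + w < q+1) := by omega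
    rw [expectedSt, if_neg hB, expectedSt, if_neg hBq',
      if_pos (⟨q, by omega, htq⟩ : ∃ q' < q+1, touches n u w q')]
    by_cases hex : ∃ q' < q, touches n u w q'
    · rw [if_pos hex, hrun2]
    · rw [if_neg hex, hrun1]

lemma E_main (σ : Bool) (n : ℕ) (adjB : ℕ → ℕ → Bool) (u w : ℕ)
    (huw : u < w) (hwn : w < n) :
    ∀ q, q ≤ n*n →
      mState (fun _ => σ) (bits n adjB u) (bits n adjB w) (6*q) = expectedSt n adjB u w q := by
  intro q
  induction q with
  | zero =>
    intro _
    have h2 : ¬ ∃ q' < 0, touches n u w q' := by rintro ⟨q', hq', -⟩; omega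
    rw [expectedSt, if_neg (by omega), if_neg h2]
    rfl
  | succ q ih =>
    intro hq1
    have hq : q < n*n := by omega
    have hn : 0 < n := by
      rcases Nat.eq_zero_or_pos n with h | h
      · subst h; simp at hq
      · exact h
    have hjn : q % n < n := Nat.mod_lt _ hn
    have hqd : n * (q / n) + q % n = q := Nat.div_add_mod q n
    have hBdiv : (n*u + w) / n = u := by
      rw [Nat.mul_add_div hn, Nat.div_eq_of_lt hwn, Nat.add_zero]
    have hBmod : (n*u + w) % n = w := by
      rw [Nat.mul_add_mod, Nat.mod_eq_of_lt hwn]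
    have htB : touches n u w (n*u + w) := by
      constructor
      · rw [hBdiv, hBmod]; exact huw
      · exact Or.inl hBdiv
    have hb : ∀ v o, o < 6 → bits n adjB v (6*q+o) =
        (if q / n < q % n then
          if v = q / n then pat (adjB (q/n) (q%n)) true o
          else if v = q % n then pat (adjB (q/n) (q%n)) false o
          else false
        else false) := by
      intro v o ho
      have h1 : (6*q+o)/6 = q := by omega
      have h2 : (6*q+o)%6 = o := by omega
      simp only [bits]
      rw [h1, h2]
    rw [show 6*(q+1) = 6*q+6 by ring, state_block, ih (by omega)]
    by_cases htq : touches n u w q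
    · by_cases hBq : q = n*u + w
      · -- own block of the pair (u,w)
        have hiu : q / n = u := by rw [hBq, hBdiv]
        have hjw : q % n = w := by rw [hBq, hBmod]
        have hcong : run6 σ (fun o => bits n adjB u (6*q+o)) (fun o => bits n adjB w (6*q+o))
            (expectedSt n adjB u w q) = run6 σ (pat (adjB u w) true) (pat (adjB u w) false)
            (expectedSt n adjB u w q) := by
          apply run6_congr
          intro o ho
          refine ⟨?_, ?_⟩
          · show bits n adjB u (6*q+o) = _
            rw [hb u o ho, hiu, hjw, if_pos huw, if_pos rfl]
          · show bits n adjB w (6*q+o) = _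
            rw [hb w o ho, hiu, hjw, if_pos huw, if_neg (by omega), if_pos rfl]
        rw [hcong]
        have hnb : ¬ (n*u + w < q) := by omega
        have hq1' : n*u + w < q + 1 := by omega
        rw [expectedSt, if_neg hnb]
        by_cases hex : ∃ q' < q, touches n u w q'
        · rw [if_pos hex, (run6_own σ (adjB u w)).2, expectedSt, if_pos hq1']
        · rw [if_neg hex, (run6_own σ (adjB u w)).1, expectedSt, if_pos hq1']
      · -- block of a pair meeting {u,w} in exactly one vertex
        obtain ⟨hij, hc⟩ := htq
        have hqB : ¬ (q / n = u ∧ q % n = w) := by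
          rintro ⟨h1, h2⟩
          rw [h1, h2] at hqd
          exact hBq hqd.symm
        rcases hc with h | h | h | h
        · -- q/n = u
          have hcong : run6 σ (fun o => bits n adjB u (6*q+o)) (fun o => bits n adjB w (6*q+o))
              (expectedSt n adjB u w q) = run6 σ (pat (adjB (q/n) (q%n)) true) (fun _ => false)
              (expectedSt n adjB u w q) := by
            apply run6_congr
            intro o ho
            refine ⟨?_, ?_⟩
            · show bits n adjB u (6*q+o) = _
              rw [hb u o ho, if_pos hij, if_pos h.symm]
            · show bits n adjB w (6*q+o) = _
              rw [hb w o ho, if_pos hij, if_neg (by omega), if_neg (fun hh => hqB ⟨h, hh.symm⟩)]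
          rw [hcong]
          exact third_party_step ⟨hij, Or.inl h⟩ hBq
            (run6_solo_left σ _ true true).1 (fun x => (run6_solo_left σ _ x true).2)
        · -- q/n = w
          have hcong : run6 σ (fun o => bits n adjB u (6*q+o)) (fun o => bits n adjB w (6*q+o))
              (expectedSt n adjB u w q) = run6 σ (fun _ => false) (pat (adjB (q/n) (q%n)) true)
              (expectedSt n adjB u w q) := by
            apply run6_congr
            intro o ho
            refine ⟨?_, ?_⟩
            · show bits n adjB u (6*q+o) = _
              rw [hb u o ho, if_pos hij, if_neg (by omega), if_neg (by omega)]
            · show bits n adjB w (6*q+o) = _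
              rw [hb w o ho, if_pos hij, if_pos h.symm]
          rw [hcong]
          exact third_party_step ⟨hij, Or.inr (Or.inl h)⟩ hBq
            (run6_solo_right σ _ true true).1 (fun x => (run6_solo_right σ _ x true).2)
        · -- q%n = u
          have hcong : run6 σ (fun o => bits n adjB u (6*q+o)) (fun o => bits n adjB w (6*q+o))
              (expectedSt n adjB u w q) = run6 σ (pat (adjB (q/n) (q%n)) false) (fun _ => false)
              (expectedSt n adjB u w q) := by
            apply run6_congr
            intro o ho
            refine ⟨?_, ?_⟩
            · show bits n adjB u (6*q+o) = _
              rw [hb u o ho, if_pos hij, if_neg (by omega), if_pos h.symm]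
            · show bits n adjB w (6*q+o) = _
              rw [hb w o ho, if_pos hij, if_neg (by omega), if_neg (by omega)]
          rw [hcong]
          exact third_party_step ⟨hij, Or.inr (Or.inr (Or.inl h))⟩ hBq
            (run6_solo_left σ _ true false).1 (fun x => (run6_solo_left σ _ x false).2)
        · -- q%n = w
          have hcong : run6 σ (fun o => bits n adjB u (6*q+o)) (fun o => bits n adjB w (6*q+o))
              (expectedSt n adjB u w q) = run6 σ (fun _ => false) (pat (adjB (q/n) (q%n)) false)
              (expectedSt n adjB u w q) := by
            apply run6_congr
            intro o ho
            refine ⟨?_, ?_⟩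
            · show bits n adjB u (6*q+o) = _
              rw [hb u o ho, if_pos hij, if_neg (fun hh => hqB ⟨hh.symm, h⟩), if_neg (by omega)]
            · show bits n adjB w (6*q+o) = _
              rw [hb w o ho, if_pos hij, if_neg (by omega), if_pos h.symm]
          rw [hcong]
          exact third_party_step ⟨hij, Or.inr (Or.inr (Or.inr h))⟩ hBq
            (run6_solo_right σ _ true false).1 (fun x => (run6_solo_right σ _ x false).2)
    · -- untouched block
      have hballs : ∀ o < 6, bits n adjB u (6*q+o) = false ∧ bits n adjB w (6*q+o) = false := by
        intro o ho
        rw [hb u o ho, hb w o ho]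
        by_cases hij : q / n < q % n
        · constructor
          · rw [if_pos hij, if_neg (fun hh => htq ⟨hij, Or.inl hh.symm⟩),
              if_neg (fun hh => htq ⟨hij, Or.inr (Or.inr (Or.inl hh.symm))⟩)]
          · rw [if_pos hij, if_neg (fun hh => htq ⟨hij, Or.inr (Or.inl hh.symm)⟩),
              if_neg (fun hh => htq ⟨hij, Or.inr (Or.inr (Or.inr hh.symm))⟩)]
        · rw [if_neg hij, if_neg hij]; exact ⟨rfl, rfl⟩
      rw [run6_congr hballs, run6_id]
      have hqB : q ≠ n*u + w := by
        intro h; exact htq (h ▸ htB)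
      have h1 : (n*u + w < q+1) ↔ (n*u + w < q) := by omega
      have h2 : (∃ q' < q+1, touches n u w q') ↔ (∃ q' < q, touches n u w q') := by
        constructor
        · rintro ⟨q', hq', ht⟩
          have : q' ≠ q := fun hh => htq (hh ▸ ht)
          exact ⟨q', by omega, ht⟩
        · rintro ⟨q', hq', ht⟩
          exact ⟨q', by omega, ht⟩
      rw [expectedSt, expectedSt]
      exact (if_congr h1 rfl (if_congr h2 rfl rfl)).symm
lemma transport {S : ℕ → Bool} {σ : Bool} {t m : ℕ} (p : Fin m ↪o ℕ)
    (hσ : ∀ k, S (p k) = σ) (hlt : ∀ k, p k < t)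
    (cf cg Ff Fg : ℕ → Bool)
    (hf1 : ∀ k : Fin m, Ff (p k) = cf k) (hf0 : ∀ j, (∀ k, p k ≠ j) → Ff j = false)
    (hg1 : ∀ k : Fin m, Fg (p k) = cg k) (hg0 : ∀ j, (∀ k, p k ≠ j) → Fg j = false) :
    mState S Ff Fg t = mState (fun _ => σ) cf cg m := by
  have key : ∀ τ, mState S Ff Fg τ =
      mState (fun _ => σ) cf cg ((Finset.univ.filter (fun k : Fin m => p k < τ)).card) := by
    intro τ
    induction τ with
    | zero =>
      have hc : (Finset.univ.filter (fun k : Fin m => p k < 0)).card = 0 := by simp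
      rw [hc]
      rfl
    | succ τ ih =>
      by_cases hex : ∃ k : Fin m, p k = τ
      · obtain ⟨k, hk⟩ := hex
        have hFf : Ff τ = cf k := by rw [← hk, hf1]
        have hFg : Fg τ = cg k := by rw [← hk, hg1]
        have hS : S τ = σ := by rw [← hk, hσ]
        have hcnt : (Finset.univ.filter (fun k' : Fin m => p k' < τ)).card = (k : ℕ) := by
          have heq : Finset.univ.filter (fun k' : Fin m => p k' < τ) =
              Finset.univ.filter (fun k' : Fin m => k' < k) := by
            ext k'
            simp only [Finset.mem_filter, Finset.mem_univ, true_and]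
            rw [← hk]
            exact p.lt_iff_lt
          rw [heq, show Finset.univ.filter (fun k' : Fin m => k' < k) = Finset.Iio k by
            ext x; simp, Fin.card_Iio]
        have hcnt1 : (Finset.univ.filter (fun k' : Fin m => p k' < τ + 1)).card = (k : ℕ) + 1 := by
          have heq : Finset.univ.filter (fun k' : Fin m => p k' < τ + 1) =
              insert k (Finset.univ.filter (fun k' : Fin m => p k' < τ)) := by
            ext k'
            simp only [Finset.mem_filter, Finset.mem_univ, true_and, Finset.mem_insert]
            constructor
            · intro hlt'
              rcases Nat.lt_succ_iff_lt_or_eq.mp hlt' with h | h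
              · exact Or.inr h
              · exact Or.inl (p.injective (h.trans hk.symm))
            · rintro (rfl | h)
              · omega
              · omega
          rw [heq, Finset.card_insert_of_notMem (by
            simp only [Finset.mem_filter, Finset.mem_univ, true_and, hk]
            omega), hcnt]
        calc mState S Ff Fg (τ+1) = mStep (S τ) (Ff τ) (Fg τ) (mState S Ff Fg τ) := rfl
          _ = mStep σ (cf k) (cg k) (mState (fun _ => σ) cf cg (k : ℕ)) := by
              rw [hS, hFf, hFg, ih, hcnt]
          _ = mState (fun _ => σ) cf cg ((k : ℕ) + 1) := rfl
          _ = _ := by rw [hcnt1]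
      · push_neg at hex
        have hFf : Ff τ = false := hf0 τ hex
        have hFg : Fg τ = false := hg0 τ hex
        have hcnt : Finset.univ.filter (fun k' : Fin m => p k' < τ + 1) =
            Finset.univ.filter (fun k' : Fin m => p k' < τ) := by
          ext k'
          simp only [Finset.mem_filter, Finset.mem_univ, true_and]
          have := hex k'
          omega
        calc mState S Ff Fg (τ+1) = mStep (S τ) (Ff τ) (Fg τ) (mState S Ff Fg τ) := rfl
          _ = mState S Ff Fg τ := by rw [hFf, hFg]; rfl
          _ = _ := by rw [ih, hcnt]
  have hall : Finset.univ.filter (fun k : Fin m => p k < t) = Finset.univ := by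
    ext k; simp [hlt k]
  rw [key t, hall, Finset.card_univ, Fintype.card_fin]

end ILMaux

open ILMaux

/-- For every finite graph `F` there is a `t₀` such that for all
`t ≥ t₀`, every graph `G` with at least one vertex and every binary sequence `S`,
the graph `ILM^t(S,G)` contains an induced copy of `F`. -/
theorem ILM_contains_induced {W : Type} [Fintype W] (F : SimpleGraph W) :
    ∃ t₀ : ℕ, ∀ t : ℕ, t₀ ≤ t →
      ∀ (V : Type) [Fintype V] [Nonempty V] (G : SimpleGraph V) (S : ℕ → Bool),
        Nonempty (F ↪g ILM S G t) := by
  classical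
  refine ⟨12 * Fintype.card W * Fintype.card W, ?_⟩
  intro t ht V _ _ G S
  set n := Fintype.card W with hn
  let ι : W ≃ Fin n := Fintype.equivFin W
  let adjB : ℕ → ℕ → Bool := fun a b =>
    if h : a < n ∧ b < n then decide (F.Adj (ι.symm ⟨a, h.1⟩) (ι.symm ⟨b, h.2⟩)) else false
  obtain ⟨σ, s, hsmem, hscard⟩ : ∃ (σ : Bool) (s : Finset ℕ),
      (∀ j ∈ s, S j = σ ∧ j < t) ∧ s.card = 6*n*n := by
    have hsum := Finset.card_filter_add_card_filter_not
      (s := Finset.range t) (p := fun j => S j = true)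
    rw [Finset.card_range] at hsum
    have h12 : 12 * n * n = 6*n*n + 6*n*n := by ring
    have hbig : 6*n*n ≤ ((Finset.range t).filter (fun j => S j = true)).card ∨
        6*n*n ≤ ((Finset.range t).filter (fun j => ¬ (S j = true))).card := by omega
    rcases hbig with hbig | hbig
    · obtain ⟨s, hsub, hcard⟩ := Finset.exists_subset_card_eq hbig
      refine ⟨true, s, fun j hj => ?_, hcard⟩
      have := Finset.mem_filter.mp (hsub hj)
      exact ⟨this.2, Finset.mem_range.mp this.1⟩
    · obtain ⟨s, hsub, hcard⟩ := Finset.exists_subset_card_eq hbig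
      refine ⟨false, s, fun j hj => ?_, hcard⟩
      have := Finset.mem_filter.mp (hsub hj)
      exact ⟨Bool.not_eq_true _ ▸ this.2, Finset.mem_range.mp this.1⟩
  let p : Fin (6*n*n) ↪o ℕ := s.orderEmbOfFin hscard
  have hpmem : ∀ k, p k ∈ s := fun k => Finset.orderEmbOfFin_mem s hscard k
  let bu : W → ℕ → Bool := fun x j =>
    decide (∃ k : Fin (6*n*n), p k = j ∧ bits n adjB (ι x).val k = true)
  have hb1 : ∀ (x : W) (k : Fin (6*n*n)), bu x (p k) = bits n adjB (ι x).val k := by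
    intro x k
    cases hbit : bits n adjB (ι x).val (k : ℕ) with
    | false =>
      apply decide_eq_false
      rintro ⟨k', hk', hb'⟩
      rw [p.injective hk', hbit] at hb'
      exact Bool.false_ne_true hb'
    | true => exact decide_eq_true ⟨k, rfl, hbit⟩
  have hb0 : ∀ (x : W) (j : ℕ), (∀ k, p k ≠ j) → bu x j = false := by
    intro x j hk
    apply decide_eq_false
    rintro ⟨k', hk', -⟩
    exact hk k' hk'
  have hkey : ∀ x y : W, ((ι x : Fin n) : ℕ) < ((ι y : Fin n) : ℕ) →
      mState S (bu x) (bu y) t = (false, adjB (ι x).val (ι y).val) := by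
    intro x y hxy
    rw [transport p (fun k => (hsmem _ (hpmem k)).1) (fun k => (hsmem _ (hpmem k)).2)
      (bits n adjB (ι x).val) (bits n adjB (ι y).val) (bu x) (bu y)
      (hb1 x) (hb0 x) (hb1 y) (hb0 y)]
    have h66 : 6*n*n = 6*(n*n) := by ring
    rw [h66, E_main σ n adjB (ι x).val (ι y).val hxy (ι y).isLt (n*n) le_rfl]
    have hBlt : n * (ι x).val + (ι y).val < n*n := by
      have h1 : (ι x).val + 1 ≤ n := (ι x).isLt
      have h2 : (ι y).val < n := (ι y).isLt
      calc n * (ι x).val + (ι y).val < n * (ι x).val + n := by omega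
        _ = n * ((ι x).val + 1) := by ring
        _ ≤ n * n := Nat.mul_le_mul_left n h1
    rw [expectedSt, if_pos hBlt]
  have hadj : ∀ x y : W, (adjB (ι x).val (ι y).val = true) ↔ F.Adj x y := by
    intro x y
    have hx : (ι x).val < n := (ι x).isLt
    have hy : (ι y).val < n := (ι y).isLt
    show (if h : _ ∧ _ then _ else _) = true ↔ _
    rw [dif_pos ⟨hx, hy⟩, Fin.eta, Fin.eta, Equiv.symm_apply_apply, Equiv.symm_apply_apply,
      decide_eq_true_eq]
  have v0 : V := Classical.arbitrary V
  refine ⟨⟨⟨fun x => emb v0 (bu x) t, ?_⟩, ?_⟩⟩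
  · intro x y hxy
    by_contra hne
    have hιne : ι x ≠ ι y := fun h => hne (ι.injective h)
    rcases lt_or_gt_of_ne hιne with h | h
    · have hst := hkey x y h
      have he := (emb_spec G S v0 t (bu x) (bu y)).1.mp hxy
      rw [hst] at he
      exact Bool.false_ne_true he
    · have hst := hkey y x h
      have he := (emb_spec G S v0 t (bu y) (bu x)).1.mp hxy.symm
      rw [hst] at he
      exact Bool.false_ne_true he
  · intro x y
    show (ILM S G t).Adj (emb v0 (bu x) t) (emb v0 (bu y) t) ↔ F.Adj x y
    rcases lt_trichotomy (ι x) (ι y) with h | h | h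
    · rw [(emb_spec G S v0 t (bu x) (bu y)).2, hkey x y h]
      exact hadj x y
    · have hxy : x = y := ι.injective h
      subst hxy
      exact iff_of_false (ILM S G t).irrefl F.irrefl
    · rw [(emb_spec G S v0 t (bu x) (bu y)).2, mState_comm, hkey y x h]
      exact (hadj y x).trans ((F.adj_comm y x))
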